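/- arXiv:math/0702009 — 6 statements merged into one kernel-verified Lean document; each statement's English description precedes it below -/
import Mathlib

section
/- For all quaternions Z, X ∈ ℍ one has ‖Z* I₁ Z − X* I₁ X‖² = (‖Z‖² + ‖X‖²)² − 4·((Re(Z·X*))² + (Re(I₁·Z·X*))²). -/
/-- The quaternion `i` (denoted `I₁`). -/
noncomputable def I1 : Quaternion ℝ := ⟨0, 1, 0, 0⟩

/-- For all quaternions `Z, X`:
`‖Z* I₁ Z − X* I₁ X‖² = (‖Z‖² + ‖X‖²)² − 4·((Re(Z·X*))² + (Re(I₁·Z·X*))²)`. -/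
theorem norm_sq_hopf_sub (Z X : Quaternion ℝ) :
    ‖star Z * I1 * Z - star X * I1 * X‖ ^ 2 =
      (‖Z‖ ^ 2 + ‖X‖ ^ 2) ^ 2 -
        4 * ((Z * star X).re ^ 2 + (I1 * (Z * star X)).re ^ 2) := by
  simp only [pow_two, ← Quaternion.normSq_eq_norm_mul_self, Quaternion.normSq_def', (show I1.re = 0 from rfl),
    (show I1.imI = 1 from rfl), (show I1.imJ = 0 from rfl), (show I1.imK = 0 from rfl),
    Quaternion.re_mul, Quaternion.imI_mul, Quaternion.imJ_mul, Quaternion.imK_mul,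
    Quaternion.re_sub, Quaternion.imI_sub, Quaternion.imJ_sub, Quaternion.imK_sub,
    Quaternion.re_star, Quaternion.imI_star, Quaternion.imJ_star, Quaternion.imK_star]
  ring
end

section
/- Let Z, X be quaternions with Z*·I₁·Z ≠ X*·I₁·X. Then ∫₀^{2π} ‖(cos θ + (sin θ)·I₁)·Z − X‖^{−2} dθ = 2π · ‖Z*·I₁·Z − X*·I₁·X‖^{−1}. (Here cos θ + (sin θ)·I₁ = exp(I₁θ), so this computes the integral of |exp(I₁θ)Z − X|^{−2} over the Hopf circle.) -/
open MeasureTheory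

lemma I1_re : I1.re = 0 := rfl
lemma I1_imI : I1.imI = 1 := rfl
lemma I1_imJ : I1.imJ = 0 := rfl
lemma I1_imK : I1.imK = 0 := rfl

lemma key_pos (a b c s : ℝ) (hs : 0 < s) (hss : s ^ 2 = a ^ 2 - b ^ 2 - c ^ 2)
    (ha : 0 < a) (θ : ℝ) : 0 < a - b * Real.cos θ - c * Real.sin θ := by
  nlinarith [Real.sin_sq_add_cos_sq θ, sq_nonneg (b * Real.sin θ - c * Real.cos θ),
    sq_nonneg (a + b * Real.cos θ + c * Real.sin θ), sq_nonneg (a - s), mul_pos hs ha]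

lemma key_deriv (a b c s : ℝ) (hs : 0 < s) (hss : s ^ 2 = a ^ 2 - b ^ 2 - c ^ 2)
    (ha : 0 < a) (θ : ℝ) :
    HasDerivAt (fun θ : ℝ => (θ + 2 * Real.arctan ((b * Real.sin θ - c * Real.cos θ) /
        (a + s - b * Real.cos θ - c * Real.sin θ))) / s)
      (a - b * Real.cos θ - c * Real.sin θ)⁻¹ θ := by
  have hD : 0 < a + s - b * Real.cos θ - c * Real.sin θ := by
    have := key_pos a b c s hs hss ha θ; linarith
  have hN : HasDerivAt (fun θ : ℝ => b * Real.sin θ - c * Real.cos θ)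
      (b * Real.cos θ + c * Real.sin θ) θ := by
    have := ((Real.hasDerivAt_sin θ).const_mul b).sub ((Real.hasDerivAt_cos θ).const_mul c)
    exact this.congr_deriv (by ring)
  have hDen : HasDerivAt (fun θ : ℝ => a + s - b * Real.cos θ - c * Real.sin θ)
      (b * Real.sin θ - c * Real.cos θ) θ := by
    have : HasDerivAt (fun θ : ℝ => a + s - b * Real.cos θ - c * Real.sin θ)
        (0 - b * (-Real.sin θ) - c * Real.cos θ) θ :=
      (((hasDerivAt_const θ (a + s)).sub ((Real.hasDerivAt_cos θ).const_mul b)).sub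
        ((Real.hasDerivAt_sin θ).const_mul c))
    convert this using 1; ring
  have hq := hN.div hDen (ne_of_gt hD)
  have harc := hq.arctan
  have := ((hasDerivAt_id θ).add (harc.const_mul 2)).div_const s
  refine this.congr_deriv (Eq.symm ?_)
  have h1 := Real.sin_sq_add_cos_sq θ
  have hpos := key_pos a b c s hs hss ha θ
  simp only [Pi.div_apply]
  have hD' := ne_of_gt hD
  have hs' := ne_of_gt hs
  field_simp
  linear_combination ((a + s - b * Real.cos θ - c * Real.sin θ) * (b ^ 2 + c ^ 2)) * h1 +
    (a + s - b * Real.cos θ - c * Real.sin θ) * hss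

lemma key_integral (a b c s : ℝ) (hs : 0 < s) (hss : s ^ 2 = a ^ 2 - b ^ 2 - c ^ 2)
    (ha : 0 < a) :
    ∫ θ in (0:ℝ)..(2 * Real.pi), (a - b * Real.cos θ - c * Real.sin θ)⁻¹ =
      2 * Real.pi / s := by
  have hcont : Continuous fun θ : ℝ => (a - b * Real.cos θ - c * Real.sin θ)⁻¹ :=
    ((continuous_const.sub (continuous_const.mul Real.continuous_cos)).sub
      (continuous_const.mul Real.continuous_sin)).inv₀
      (fun θ => ne_of_gt (key_pos a b c s hs hss ha θ))
  rw [intervalIntegral.integral_eq_sub_of_hasDerivAt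
    (fun θ _ => key_deriv a b c s hs hss ha θ) (hcont.intervalIntegrable _ _)]
  simp [Real.sin_two_pi, Real.cos_two_pi]
  ring

lemma norm_formula (Z X : Quaternion ℝ) (S C : ℝ) (h1 : S ^ 2 + C ^ 2 = 1) :
    ‖((C : Quaternion ℝ) + (S : Quaternion ℝ) * I1) * Z - X‖ ^ 2 =
      (Quaternion.normSq Z + Quaternion.normSq X) - (2 * (Z * star X).re) * C -
        (-2 * (Z * star X).imI) * S := by
  rw [sq, ← Quaternion.normSq_eq_norm_mul_self]
  simp only [Quaternion.normSq_def', Quaternion.re_mul, Quaternion.imI_mul, Quaternion.imJ_mul,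
    Quaternion.imK_mul, Quaternion.re_sub, Quaternion.imI_sub, Quaternion.imJ_sub,
    Quaternion.imK_sub, Quaternion.re_add, Quaternion.imI_add, Quaternion.imJ_add,
    Quaternion.imK_add, Quaternion.re_star, Quaternion.imI_star, Quaternion.imJ_star,
    Quaternion.imK_star, Quaternion.re_coe, Quaternion.imI_coe, Quaternion.imJ_coe,
    Quaternion.imK_coe, I1_re, I1_imI, I1_imJ, I1_imK]
  ring_nf
  linear_combination (Z.re ^ 2 + Z.imI ^ 2 + Z.imJ ^ 2 + Z.imK ^ 2) * h1

lemma hopf_formula (Z X : Quaternion ℝ) :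
    Quaternion.normSq (star Z * I1 * Z - star X * I1 * X) =
      (Quaternion.normSq Z + Quaternion.normSq X) ^ 2 - (2 * (Z * star X).re) ^ 2 -
        (-2 * (Z * star X).imI) ^ 2 := by
  simp only [Quaternion.normSq_def', Quaternion.re_mul, Quaternion.imI_mul, Quaternion.imJ_mul,
    Quaternion.imK_mul, Quaternion.re_sub, Quaternion.imI_sub, Quaternion.imJ_sub,
    Quaternion.imK_sub, Quaternion.re_star, Quaternion.imI_star, Quaternion.imJ_star,
    Quaternion.imK_star, I1_re, I1_imI, I1_imJ, I1_imK]
  ring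

/-- For quaternions `Z, X` with `K(Z) ≠ K(X)` (where `K(Z) = Z* I₁ Z` is the Hopf map),
`∫₀^{2π} ‖exp(I₁θ)Z − X‖⁻² dθ = 2π·‖K(Z) − K(X)‖⁻¹`, where
`exp(I₁θ) = cos θ + (sin θ)·I₁`. -/
theorem integral_hopf_fibre (Z X : Quaternion ℝ)
    (h : star Z * I1 * Z ≠ star X * I1 * X) :
    ∫ θ in (0:ℝ)..(2 * Real.pi),
        (‖((Real.cos θ : Quaternion ℝ) + (Real.sin θ : Quaternion ℝ) * I1) * Z - X‖ ^ 2)⁻¹ =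
      2 * Real.pi * ‖star Z * I1 * Z - star X * I1 * X‖⁻¹ := by
  set a : ℝ := Quaternion.normSq Z + Quaternion.normSq X with hadef
  set b : ℝ := 2 * (Z * star X).re with hbdef
  set c : ℝ := -2 * (Z * star X).imI with hcdef
  set s : ℝ := ‖star Z * I1 * Z - star X * I1 * X‖ with hsdef
  have hs : 0 < s := norm_pos_iff.mpr (sub_ne_zero.mpr h)
  have hss : s ^ 2 = a ^ 2 - b ^ 2 - c ^ 2 := by
    rw [hsdef, sq, ← Quaternion.normSq_eq_norm_mul_self, hopf_formula]
  have ha : 0 < a := by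
    rcases lt_or_eq_of_le (add_nonneg (Quaternion.normSq_nonneg (a := Z))
      (Quaternion.normSq_nonneg (a := X)) : (0:ℝ) ≤ a) with h' | h'
    · exact h'
    · exfalso
      have hZ : Quaternion.normSq Z = 0 := by
        nlinarith [Quaternion.normSq_nonneg (a := Z), Quaternion.normSq_nonneg (a := X)]
      have hX : Quaternion.normSq X = 0 := by
        nlinarith [Quaternion.normSq_nonneg (a := Z), Quaternion.normSq_nonneg (a := X)]
      rw [Quaternion.normSq_eq_zero] at hZ hX
      exact h (by rw [hZ, hX])
  have hcongr : Set.EqOn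
      (fun θ : ℝ => (‖((Real.cos θ : Quaternion ℝ) + (Real.sin θ : Quaternion ℝ) * I1) * Z - X‖ ^ 2)⁻¹)
      (fun θ : ℝ => (a - b * Real.cos θ - c * Real.sin θ)⁻¹)
      (Set.uIcc (0:ℝ) (2 * Real.pi)) := by
    intro θ _
    simp only
    rw [norm_formula Z X _ _ (Real.sin_sq_add_cos_sq θ)]
  rw [intervalIntegral.integral_congr hcongr, key_integral a b c s hs hss ha, div_eq_mul_inv]
end

section
/- The quaternionic Hopf map K(Z) := Z*·I₁·Z takes values in the purely imaginary quaternions, i.e. Re(Z*·I₁·Z) = 0 for every Z ∈ ℍ, and it is surjective onto the purely imaginary quaternions: for every W ∈ ℍ with Re W = 0 there exists Z ∈ ℍ with Z*·I₁·Z = W. -/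
lemma I1_parts : I1.re = 0 ∧ I1.imI = 1 ∧ I1.imJ = 0 ∧ I1.imK = 0 :=
  ⟨rfl, rfl, rfl, rfl⟩

lemma K_comp (Z : Quaternion ℝ) :
    star Z * I1 * Z =
      (⟨0, Z.re^2+Z.imI^2-Z.imJ^2-Z.imK^2, 2*(Z.imI*Z.imJ - Z.re*Z.imK),
        2*(Z.imI*Z.imK + Z.re*Z.imJ)⟩ : Quaternion ℝ) := by
  ext <;>
    simp [I1_parts, Quaternion.re_mul, Quaternion.imI_mul, Quaternion.imJ_mul,
      Quaternion.imK_mul] <;> ring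

/-- The quaternionic Hopf map `K(Z) = Z* I₁ Z` takes values in the purely imaginary
quaternions, and is surjective onto them. -/
theorem hopf_maps_onto_imaginary :
    (∀ Z : Quaternion ℝ, (star Z * I1 * Z).re = 0) ∧
      ∀ W : Quaternion ℝ, W.re = 0 → ∃ Z : Quaternion ℝ, star Z * I1 * Z = W := by
  constructor
  · intro Z
    simp [I1_parts, Quaternion.re_mul]
    ring
  · intro W hW
    set a := W.imI with ha
    set b := W.imJ with hb
    set c := W.imK with hc
    set r := Real.sqrt (a^2 + b^2 + c^2) with hrdef
    have hr0 : 0 ≤ r := Real.sqrt_nonneg _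
    have hr2 : r^2 = a^2 + b^2 + c^2 := Real.sq_sqrt (by positivity)
    have habs : |a| ≤ r := by
      rw [hrdef, ← Real.sqrt_sq_eq_abs]
      exact Real.sqrt_le_sqrt (by nlinarith [sq_nonneg b, sq_nonneg c])
    have hra : 0 ≤ r + a := by
      have := neg_abs_le a; linarith
    rcases hra.lt_or_eq with hpos | heq
    · set s := Real.sqrt ((r + a) / 2) with hsdef
      have hs2 : s^2 = (r + a) / 2 := Real.sq_sqrt (by linarith)
      have hspos : 0 < s := Real.sqrt_pos.2 (by linarith)
      have hsne : s ≠ 0 := ne_of_gt hspos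
      refine ⟨⟨s, 0, c/(2*s), -(b/(2*s))⟩, ?_⟩
      refine (K_comp _).trans ?_
      simp only []
      ext
      · exact hW.symm
      · show s^2 + 0^2 - (c/(2*s))^2 - (-(b/(2*s)))^2 = a
        field_simp
        nlinarith [hs2, hr2]
      · show 2*(0*(c/(2*s)) - s*(-(b/(2*s)))) = b
        field_simp; ring
      · show 2*(0*(-(b/(2*s))) + s*(c/(2*s))) = c
        field_simp; ring
    · have har : a = -r := by linarith
      have hbc : b = 0 ∧ c = 0 := by
        constructor <;> nlinarith [sq_nonneg b, sq_nonneg c]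
      refine ⟨⟨0, 0, Real.sqrt r, 0⟩, ?_⟩
      refine (K_comp _).trans ?_
      simp only []
      ext
      · exact hW.symm
      · show 0^2 + 0^2 - (Real.sqrt r)^2 - 0^2 = a
        rw [Real.sq_sqrt hr0]; linarith
      · show 2*(0*Real.sqrt r - 0*0) = b
        rw [hbc.1]; ring
      · show 2*(0*0 + 0*Real.sqrt r) = c
        rw [hbc.2]; ring
end

section
/- There exists a constant C' > 0 such that for every measurable function g : ℝ³ → [0,∞], ∫_{ℝ³} ‖x‖^{−1}·g(x) dx = C' · ∫_{ℝ⁴} g(K(z)) dz, where both integrals are with respect to Lebesgue measure and take values in [0,∞]. -/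
open MeasureTheory

/-- The Hopf (Kustaanheimo–Stiefel) map `K : ℝ⁴ → ℝ³`,
`K(z₀,z₁,z₂,z₃) = (z₀² − z₁² − z₂² + z₃², 2z₀z₁ − 2z₂z₃, 2z₀z₂ + 2z₁z₃)`. -/
noncomputable def hopfKS (z : EuclideanSpace ℝ (Fin 4)) : EuclideanSpace ℝ (Fin 3) :=
  (WithLp.equiv 2 (Fin 3 → ℝ)).symm
    ![z 0 ^ 2 - z 1 ^ 2 - z 2 ^ 2 + z 3 ^ 2,
      2 * z 0 * z 1 - 2 * z 2 * z 3,
      2 * z 0 * z 2 + 2 * z 1 * z 3]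

open Set
open scoped Real

noncomputable section

/-- Polar coordinates change of variables for the Lebesgue integral on `ℝ × ℝ`. -/
theorem lintegral_comp_polarCoord_symm' (f : ℝ × ℝ → ENNReal) :
    (∫⁻ p in polarCoord.target, ENNReal.ofReal p.1 * f (polarCoord.symm p)) = ∫⁻ p, f p := by
  set B : ℝ × ℝ → ℝ × ℝ →L[ℝ] ℝ × ℝ := fun p =>
    LinearMap.toContinuousLinearMap (Matrix.toLin (Module.Basis.finTwoProd ℝ) (Module.Basis.finTwoProd ℝ)
      !![Real.cos p.2, -p.1 * Real.sin p.2; Real.sin p.2, p.1 * Real.cos p.2])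
  have A : ∀ p ∈ polarCoord.target, HasFDerivWithinAt polarCoord.symm (B p)
      polarCoord.target p := fun p _ =>
    (hasFDerivAt_polarCoord_symm p).hasFDerivWithinAt
  have B_det : ∀ p, (B p).det = p.1 := by
    intro p
    conv_rhs => rw [← one_mul p.1, ← Real.cos_sq_add_sin_sq p.2]
    simp only [B, neg_mul, LinearMap.det_toContinuousLinearMap, LinearMap.det_toLin,
      Matrix.det_fin_two_of, sub_neg_eq_add]
    ring
  symm
  calc
    ∫⁻ p, f p = ∫⁻ p in polarCoord.source, f p := by
      rw [← setLIntegral_univ]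
      exact (setLIntegral_congr polarCoord_source_ae_eq_univ.symm)
    _ = ∫⁻ p in polarCoord.target, ENNReal.ofReal p.1 * f (polarCoord.symm p) := by
      rw [← polarCoord.symm_image_target_eq_source,
        lintegral_image_eq_lintegral_abs_det_fderiv_mul volume
          polarCoord.open_target.measurableSet A polarCoord.symm.injOn f]
      refine setLIntegral_congr_fun polarCoord.open_target.measurableSet
        (fun p hp => ?_)
      rw [B_det, abs_of_pos hp.1]

theorem complex_lintegral_comp_polarCoord_symm (f : ℂ → ENNReal) :
    (∫⁻ p in polarCoord.target, ENNReal.ofReal p.1 * f (Complex.polarCoord.symm p)) =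
      ∫⁻ z, f z := by
  rw [← (Complex.volume_preserving_equiv_real_prod.symm).lintegral_comp_emb
    Complex.measurableEquivRealProd.symm.measurableEmbedding,
    ← lintegral_comp_polarCoord_symm' fun p => f (Complex.measurableEquivRealProd.symm p)]
  rfl

/-- Radial functions: `∫ f(|z|) dz = 2π ∫_{r>0} r f(r) dr`. -/
theorem lintegral_comp_abs (f : ℝ → ENNReal) (hf : Measurable f) :
    ∫⁻ z : ℂ, f ‖z‖ =
      ENNReal.ofReal (2 * π) * ∫⁻ r in Ioi (0 : ℝ), ENNReal.ofReal r * f r := by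
  rw [← complex_lintegral_comp_polarCoord_symm (fun z => f ‖z‖)]
  have h1 : ∀ p ∈ polarCoord.target,
      ENNReal.ofReal p.1 * f ‖Complex.polarCoord.symm p‖ =
        ENNReal.ofReal p.1 * f p.1 := by
    intro p hp
    rw [Complex.norm_polarCoord_symm, abs_of_pos hp.1]
  rw [setLIntegral_congr_fun (polarCoord.open_target.measurableSet)
    h1]
  have : polarCoord.target = Ioi (0:ℝ) ×ˢ Ioo (-π) π := rfl
  rw [this, Measure.volume_eq_prod, ← Measure.prod_restrict,
    lintegral_prod _ (by fun_prop : AEMeasurable (fun p : ℝ × ℝ => ENNReal.ofReal p.1 * f p.1) _)]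
  simp only [lintegral_const, Measure.restrict_apply MeasurableSet.univ, univ_inter,
    Real.volume_Ioo]
  rw [← lintegral_const_mul _ (by fun_prop : Measurable fun r : ℝ => ENNReal.ofReal r * f r)]
  congr 1
  ext r
  rw [mul_comm]
  congr 2
  ring

theorem det_mulLeft_complex (a : ℂ) :
    LinearMap.det (LinearMap.mulLeft ℝ a) = Complex.normSq a := by
  rw [← LinearMap.det_toMatrix Complex.basisOneI, Matrix.det_fin_two]
  simp [LinearMap.toMatrix_apply, Complex.coe_basisOneI_repr, Complex.normSq_apply]

theorem lintegral_mul_left_complex {a : ℂ} (ha : a ≠ 0) (f : ℂ → ENNReal)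
    (hf : Measurable f) :
    ∫⁻ v : ℂ, f (a * v) = ENNReal.ofReal (Complex.normSq a)⁻¹ * ∫⁻ w : ℂ, f w := by
  have hd : LinearMap.det (LinearMap.mulLeft ℝ a) ≠ 0 := by
    rw [det_mulLeft_complex]; simpa using Complex.normSq_pos.2 ha |>.ne'
  have hmap := Measure.map_linearMap_addHaar_eq_smul_addHaar (volume : Measure ℂ) hd
  have : ∫⁻ w : ℂ, f w ∂(Measure.map (LinearMap.mulLeft ℝ a) volume) =
      ∫⁻ v : ℂ, f (a * v) := by
    rw [lintegral_map hf]
    · simp [LinearMap.mulLeft_apply]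
    · exact (LinearMap.mulLeft ℝ a).continuous_of_finiteDimensional.measurable
  rw [← this, hmap, lintegral_smul_measure, det_mulLeft_complex, abs_of_nonneg (inv_nonneg.2 (Complex.normSq_nonneg a)), smul_eq_mul]

theorem phi_image (c : ℝ) (hc : 0 < c) :
    (fun r : ℝ => r ^ 2 - c / (4 * r ^ 2)) '' Ioi 0 = univ := by
  apply eq_univ_of_forall
  intro t
  set s := Real.sqrt (t ^ 2 + c) with hs_def
  have hs2 : s ^ 2 = t ^ 2 + c := Real.sq_sqrt (by positivity)
  have hsnn : 0 ≤ s := Real.sqrt_nonneg _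
  have hst : 0 < t + s := by nlinarith
  refine ⟨Real.sqrt ((t + s) / 2), ?_, ?_⟩
  · exact Real.sqrt_pos.2 (by linarith)
  · have hr2 : Real.sqrt ((t + s) / 2) ^ 2 = (t + s) / 2 :=
      Real.sq_sqrt (by linarith)
    simp only [hr2]
    field_simp
    nlinarith

theorem phi_strictMono (c : ℝ) (hc : 0 < c) :
    StrictMonoOn (fun r : ℝ => r ^ 2 - c / (4 * r ^ 2)) (Ioi 0) := by
  intro x hx y hy hxy
  simp only [mem_Ioi] at hx hy
  have h1 : x ^ 2 < y ^ 2 := by nlinarith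
  have h2 : c / (4 * y ^ 2) ≤ c / (4 * x ^ 2) := by
    apply div_le_div_of_nonneg_left hc.le (by positivity)
    nlinarith
  simp only
  linarith

theorem phi_hasDeriv (c : ℝ) {r : ℝ} (hr : 0 < r) :
    HasDerivAt (fun r : ℝ => r ^ 2 - c / (4 * r ^ 2)) (2 * r + c / (2 * r ^ 3)) r := by
  have h1 : HasDerivAt (fun r : ℝ => r ^ 2) (2 * r) r := by
    simpa using hasDerivAt_pow 2 r
  have h2 : HasDerivAt (fun r : ℝ => c / (4 * r ^ 2)) (-(c / (2 * r ^ 3))) r := by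
    have : HasDerivAt (fun r : ℝ => (r ^ 2)⁻¹) (-(2 * r) / (r ^ 2) ^ 2) r :=
      h1.inv (pow_ne_zero 2 hr.ne')
    have h3 := this.const_mul (c / 4)
    have heq : (fun r : ℝ => c / (4 * r ^ 2)) = fun y : ℝ => c / 4 * (y ^ 2)⁻¹ := by
      funext y
      rw [← div_div, div_eq_mul_inv]
    rw [heq]
    refine h3.congr_deriv ?_
    have : r ≠ 0 := hr.ne'
    field_simp
    ring
  exact (h1.sub h2).congr_deriv (by ring)

theorem lintegral_phi (c : ℝ) (hc : 0 < c) (h : ℝ → ENNReal) :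
    ∫⁻ t : ℝ, h t =
      ∫⁻ r in Ioi (0 : ℝ),
        ENNReal.ofReal (2 * r + c / (2 * r ^ 3)) * h (r ^ 2 - c / (4 * r ^ 2)) := by
  have key := lintegral_image_eq_lintegral_abs_det_fderiv_mul volume measurableSet_Ioi
    (f := fun r : ℝ => r ^ 2 - c / (4 * r ^ 2))
    (f' := fun r => (1 : ℝ →L[ℝ] ℝ).smulRight (2 * r + c / (2 * r ^ 3)))
    (fun r hr => ((phi_hasDeriv c (mem_Ioi.1 hr)).hasDerivWithinAt).hasFDerivWithinAt)
    ((phi_strictMono c hc).injOn) h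
  rw [phi_image c hc, setLIntegral_univ] at key
  rw [key]
  refine setLIntegral_congr_fun measurableSet_Ioi (fun r hr => ?_)
  have hr : 0 < r := hr
  rw [ContinuousLinearMap.smulRight_one_eq_toSpanSingleton, ContinuousLinearMap.det_toSpanSingleton, abs_of_pos (by positivity)]

def psi3 (t : ℝ) (w : ℂ) : EuclideanSpace ℝ (Fin 3) :=
  (WithLp.equiv 2 (Fin 3 → ℝ)).symm ![t, w.re, w.im]

theorem psi3_measurePreserving :
    MeasurePreserving (fun p : ℝ × ℂ => psi3 p.1 p.2) volume volume := by
  have m1 : MeasurePreserving (Prod.map (id : ℝ → ℝ) Complex.measurableEquivRealProd)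
      volume volume :=
    (MeasurePreserving.id volume).prod Complex.volume_preserving_equiv_real_prod
  have m2 : MeasurePreserving
      (Prod.map (id : ℝ → ℝ) (MeasurableEquiv.finTwoArrow (α := ℝ)).symm) volume volume :=
    (MeasurePreserving.id volume).prod (volume_preserving_finTwoArrow ℝ).symm
  have m3 : MeasurePreserving
      (MeasurableEquiv.piFinSuccAbove (fun _ : Fin 3 => ℝ) 0).symm volume volume :=
    (volume_preserving_piFinSuccAbove (fun _ : Fin 3 => ℝ) 0).symm
  have m4 : MeasurePreserving (MeasurableEquiv.toLp 2 (Fin 3 → ℝ)) volume volume :=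
    (EuclideanSpace.volume_preserving_symm_measurableEquiv_toLp (Fin 3)).symm
  have comp := ((m4.comp m3).comp m2).comp m1
  convert comp using 1
  funext p
  show psi3 p.1 p.2 = (MeasurableEquiv.toLp 2 (Fin 3 → ℝ))
    ((MeasurableEquiv.piFinSuccAbove (fun _ : Fin 3 => ℝ) 0).symm
      (p.1, ![(Complex.measurableEquivRealProd p.2).1, (Complex.measurableEquivRealProd p.2).2]))
  rw [MeasurableEquiv.coe_toLp]
  unfold psi3
  rw [WithLp.equiv_symm_apply]
  congr 1
  funext i
  fin_cases i <;> rfl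

def psi4 (u v : ℂ) : EuclideanSpace ℝ (Fin 4) :=
  (WithLp.equiv 2 (Fin 4 → ℝ)).symm ![u.re, v.re, v.im, u.im]

theorem psi4_measurePreserving :
    MeasurePreserving (fun q : ℂ × ℂ => psi4 q.1 q.2) volume volume := by
  have m1 : MeasurePreserving
      (Prod.map (Complex.measurableEquivRealProd) (Complex.measurableEquivRealProd))
      volume volume :=
    Complex.volume_preserving_equiv_real_prod.prod Complex.volume_preserving_equiv_real_prod
  have m2 : MeasurePreserving (MeasurableEquiv.prodAssoc :
      (ℝ × ℝ) × (ℝ × ℝ) ≃ᵐ ℝ × ℝ × ℝ × ℝ) volume volume :=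
    volume_preserving_prodAssoc
  have m3 : MeasurePreserving
      (Prod.map (id : ℝ → ℝ)
        (Prod.map (id : ℝ → ℝ) (MeasurableEquiv.finTwoArrow (α := ℝ)).symm)) volume volume :=
    (MeasurePreserving.id volume).prod
      ((MeasurePreserving.id volume).prod (volume_preserving_finTwoArrow ℝ).symm)
  have m4 : MeasurePreserving
      (Prod.map (id : ℝ → ℝ) (MeasurableEquiv.piFinSuccAbove (fun _ : Fin 3 => ℝ) 2).symm)
      volume volume :=
    (MeasurePreserving.id volume).prod
      (volume_preserving_piFinSuccAbove (fun _ : Fin 3 => ℝ) 2).symm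
  have m5 : MeasurePreserving
      (MeasurableEquiv.piFinSuccAbove (fun _ : Fin 4 => ℝ) 0).symm volume volume :=
    (volume_preserving_piFinSuccAbove (fun _ : Fin 4 => ℝ) 0).symm
  have m6 : MeasurePreserving (MeasurableEquiv.toLp 2 (Fin 4 → ℝ)) volume volume :=
    (EuclideanSpace.volume_preserving_symm_measurableEquiv_toLp (Fin 4)).symm
  have comp := ((((m6.comp m5).comp m4).comp m3).comp m2).comp m1
  convert comp using 1
  funext q
  show psi4 q.1 q.2 = _
  rw [Function.comp_apply, Function.comp_apply, Function.comp_apply, Function.comp_apply,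
    Function.comp_apply, MeasurableEquiv.coe_toLp]
  unfold psi4
  rw [WithLp.equiv_symm_apply]
  congr 1
  funext i
  fin_cases i <;> rfl

theorem hopfKS_psi4 (u v : ℂ) :
    hopfKS (psi4 u v) = psi3 (Complex.normSq u - Complex.normSq v) (2 * (u * v)) := by
  unfold hopfKS psi4 psi3
  congr 1
  funext i
  fin_cases i <;>
    simp [Complex.normSq_apply, Complex.mul_re, Complex.mul_im] <;> ring

theorem norm_psi3 (t : ℝ) (w : ℂ) :
    ‖psi3 t w‖ = Real.sqrt (t ^ 2 + Complex.normSq w) := by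
  rw [EuclideanSpace.norm_eq]
  congr 1
  rw [Fin.sum_univ_three]
  simp [psi3, Complex.normSq_apply, sq_abs]
  ring

@[fun_prop]
theorem measurable_normSq : Measurable Complex.normSq :=
  Complex.continuous_normSq.measurable

theorem volume_complex_singleton (z : ℂ) : volume {z} = 0 :=
  measure_singleton z

theorem ae_ne_zero_complex : ∀ᵐ u : ℂ, u ≠ 0 := by
  rw [ae_iff]
  have : {u : ℂ | ¬ u ≠ 0} = {0} := by ext u; simp
  rw [this]
  exact volume_complex_singleton 0

theorem core (G : ℝ × ℂ → ENNReal) (hG : Measurable G) :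
    ∫⁻ p : ℝ × ℂ, ENNReal.ofReal (Real.sqrt (p.1 ^ 2 + Complex.normSq p.2))⁻¹ * G p =
      ENNReal.ofReal (4 / π) *
        ∫⁻ q : ℂ × ℂ, G (Complex.normSq q.1 - Complex.normSq q.2, 2 * (q.1 * q.2)) := by
  set T : ℂ × ℂ → ENNReal := fun x =>
    ENNReal.ofReal (4 * Complex.normSq x.1)⁻¹ *
      G (Complex.normSq x.1 - Complex.normSq x.2 / (4 * Complex.normSq x.1), x.2) with hT
  have hTmeas : Measurable T := by
    apply Measurable.mul
    · fun_prop
    · exact hG.comp (by fun_prop)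
  have hGcomp : Measurable fun q : ℂ × ℂ =>
      G (Complex.normSq q.1 - Complex.normSq q.2, 2 * (q.1 * q.2)) :=
    hG.comp (by fun_prop)
  -- Step 1: Tonelli + v-scaling + swap
  have h1 : ∫⁻ q : ℂ × ℂ, G (Complex.normSq q.1 - Complex.normSq q.2, 2 * (q.1 * q.2)) =
      ∫⁻ w : ℂ, ∫⁻ u : ℂ, T (u, w) := by
    rw [Measure.volume_eq_prod, lintegral_prod _ hGcomp.aemeasurable]
    have h2 : ∀ᵐ u : ℂ, (∫⁻ v : ℂ, G (Complex.normSq u - Complex.normSq v, 2 * (u * v))) =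
        ∫⁻ w : ℂ, T (u, w) := by
      filter_upwards [ae_ne_zero_complex] with u hu
      have h4 : (0 : ℝ) < Complex.normSq u := Complex.normSq_pos.2 hu
      have ha : (2 : ℂ) * u ≠ 0 := by simp [hu]
      have h2' : Complex.normSq (2 * u) = 4 * Complex.normSq u := by
        rw [Complex.normSq_mul]
        norm_num [Complex.normSq_apply]
      set F : ℂ → ENNReal :=
        fun w => G (Complex.normSq u - Complex.normSq w / (4 * Complex.normSq u), w) with hF
      have hFmeas : Measurable F := hG.comp (by fun_prop)
      calc (∫⁻ v : ℂ, G (Complex.normSq u - Complex.normSq v, 2 * (u * v)))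
          = ∫⁻ v : ℂ, F ((2 * u) * v) := by
            refine lintegral_congr fun v => ?_
            simp only [hF]
            rw [Complex.normSq_mul, h2']
            congr 2
            · rw [mul_comm (4 * Complex.normSq u) (Complex.normSq v),
                mul_div_assoc, div_self (by positivity), mul_one]
            · ring
        _ = ENNReal.ofReal (Complex.normSq (2 * u))⁻¹ * ∫⁻ w : ℂ, F w :=
            lintegral_mul_left_complex ha F hFmeas
        _ = ∫⁻ w : ℂ, T (u, w) := by
            rw [h2', ← lintegral_const_mul' _ _ ENNReal.ofReal_ne_top]
    rw [lintegral_congr_ae h2, lintegral_lintegral_swap hTmeas.aemeasurable]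
  -- Step 2: inner integral over u via polar coordinates and the 1D substitution
  have h5 : ∀ᵐ w : ℂ, (∫⁻ u : ℂ, T (u, w)) = ENNReal.ofReal (π / 4) *
      ∫⁻ t : ℝ, ENNReal.ofReal (Real.sqrt (t ^ 2 + Complex.normSq w))⁻¹ * G (t, w) := by
    filter_upwards [ae_ne_zero_complex] with w hw
    set c := Complex.normSq w with hc_def
    have hc : 0 < c := Complex.normSq_pos.2 hw
    set f : ℝ → ENNReal :=
      fun r => ENNReal.ofReal (4 * r ^ 2)⁻¹ * G (r ^ 2 - c / (4 * r ^ 2), w) with hf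
    have hfmeas : Measurable f := by
      apply Measurable.mul
      · fun_prop
      · exact hG.comp (by fun_prop)
    set h₀ : ℝ → ENNReal :=
      fun t => ENNReal.ofReal (8 * Real.sqrt (t ^ 2 + c))⁻¹ * G (t, w) with hh
    have e2 : ∀ r ∈ Ioi (0 : ℝ), ENNReal.ofReal r * f r =
        ENNReal.ofReal (2 * r + c / (2 * r ^ 3)) * h₀ (r ^ 2 - c / (4 * r ^ 2)) := by
      intro r hr
      have hr : (0 : ℝ) < r := hr
      have hs : Real.sqrt ((r ^ 2 - c / (4 * r ^ 2)) ^ 2 + c) = r ^ 2 + c / (4 * r ^ 2) := by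
        have heq : (r ^ 2 - c / (4 * r ^ 2)) ^ 2 + c = (r ^ 2 + c / (4 * r ^ 2)) ^ 2 := by
          field_simp
          ring
        rw [heq, Real.sqrt_sq (by positivity)]
      simp only [hh, hf]
      rw [hs, ← mul_assoc, ← mul_assoc, ← ENNReal.ofReal_mul hr.le,
        ← ENNReal.ofReal_mul (by positivity)]
      congr 2
      field_simp
      ring
    calc (∫⁻ u : ℂ, T (u, w)) = ∫⁻ u : ℂ, f ‖u‖ := by
          refine lintegral_congr fun u => ?_
          simp only [hT, hf]
          rw [Complex.sq_norm]
      _ = ENNReal.ofReal (2 * π) * ∫⁻ r in Ioi (0 : ℝ), ENNReal.ofReal r * f r :=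
          lintegral_comp_abs f hfmeas
      _ = ENNReal.ofReal (2 * π) * ∫⁻ r in Ioi (0 : ℝ),
            ENNReal.ofReal (2 * r + c / (2 * r ^ 3)) * h₀ (r ^ 2 - c / (4 * r ^ 2)) := by
          rw [setLIntegral_congr_fun measurableSet_Ioi e2]
      _ = ENNReal.ofReal (2 * π) * ∫⁻ t : ℝ, h₀ t := by rw [← lintegral_phi c hc h₀]
      _ = ENNReal.ofReal (π / 4) *
            ∫⁻ t : ℝ, ENNReal.ofReal (Real.sqrt (t ^ 2 + c))⁻¹ * G (t, w) := by
          have hsplit : ∀ t : ℝ, h₀ t = ENNReal.ofReal (8 : ℝ)⁻¹ *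
              (ENNReal.ofReal (Real.sqrt (t ^ 2 + c))⁻¹ * G (t, w)) := by
            intro t
            simp only [hh]
            rw [mul_inv, ENNReal.ofReal_mul (by norm_num), mul_assoc]
          simp only [hsplit]
          rw [lintegral_const_mul' _ _ ENNReal.ofReal_ne_top, ← mul_assoc,
            ← ENNReal.ofReal_mul (by positivity)]
          norm_num
          rw [show 2 * π * (1/8) = π / 4 by ring]
  rw [h1, lintegral_congr_ae h5, lintegral_const_mul' _ _ ENNReal.ofReal_ne_top, ← mul_assoc,
    ← ENNReal.ofReal_mul (by positivity)]
  have hpi : 4 / π * (π / 4) = 1 := by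
    field_simp
  have hI : Measurable fun p : ℝ × ℂ =>
      ENNReal.ofReal (Real.sqrt (p.1 ^ 2 + Complex.normSq p.2))⁻¹ * G p := by
    apply Measurable.mul
    · fun_prop
    · exact hG
  rw [hpi, ENNReal.ofReal_one, one_mul, Measure.volume_eq_prod,
    lintegral_prod _ hI.aemeasurable, lintegral_lintegral_swap hI.aemeasurable]

theorem measurable_hopfKS : Measurable hopfKS := by
  have hcoord : ∀ i : Fin 4, Measurable fun z : EuclideanSpace ℝ (Fin 4) => z i := fun i =>
    (measurable_pi_apply i).comp (MeasurableEquiv.toLp 2 (Fin 4 → ℝ)).symm.measurable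
  have h1 : Measurable (⇑(WithLp.equiv 2 (Fin 3 → ℝ)).symm) := by
    rw [WithLp.equiv_symm_apply, ← MeasurableEquiv.coe_toLp]
    exact (MeasurableEquiv.toLp 2 (Fin 3 → ℝ)).measurable
  refine h1.comp (measurable_pi_lambda _ fun i => ?_)
  fin_cases i
  · exact
      ((((hcoord 0).pow_const 2).sub ((hcoord 1).pow_const 2)).sub
        ((hcoord 2).pow_const 2)).add ((hcoord 3).pow_const 2)
  · exact
      ((measurable_const.mul (hcoord 0)).mul (hcoord 1)).sub
        ((measurable_const.mul (hcoord 2)).mul (hcoord 3))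
  · exact
      ((measurable_const.mul (hcoord 0)).mul (hcoord 2)).add
        ((measurable_const.mul (hcoord 1)).mul (hcoord 3))

/-- There is a constant `C' > 0` such that for every measurable `g : ℝ³ → [0,∞]`,
`∫_{ℝ³} ‖x‖⁻¹ g(x) dx = C' ∫_{ℝ⁴} g(K(z)) dz`. -/
theorem lintegral_hopfKS_change_of_variables :
    ∃ C : ℝ, 0 < C ∧
      ∀ g : EuclideanSpace ℝ (Fin 3) → ENNReal, Measurable g →
        ∫⁻ x, ENNReal.ofReal ‖x‖⁻¹ * g x =
          ENNReal.ofReal C * ∫⁻ z, g (hopfKS z) := by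
  refine ⟨4 / π, div_pos (by norm_num) Real.pi_pos, fun g hg => ?_⟩
  have hmeasL : Measurable fun x : EuclideanSpace ℝ (Fin 3) =>
      ENNReal.ofReal ‖x‖⁻¹ * g x :=
    (measurable_norm.inv.ennreal_ofReal).mul hg
  have hG : Measurable fun p : ℝ × ℂ => g (psi3 p.1 p.2) :=
    hg.comp psi3_measurePreserving.measurable
  calc ∫⁻ x, ENNReal.ofReal ‖x‖⁻¹ * g x
      = ∫⁻ p : ℝ × ℂ, ENNReal.ofReal ‖psi3 p.1 p.2‖⁻¹ * g (psi3 p.1 p.2) :=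
        (psi3_measurePreserving.lintegral_comp hmeasL).symm
    _ = ∫⁻ p : ℝ × ℂ, ENNReal.ofReal (Real.sqrt (p.1 ^ 2 + Complex.normSq p.2))⁻¹ *
          g (psi3 p.1 p.2) := by
        refine lintegral_congr fun p => ?_
        rw [norm_psi3]
    _ = ENNReal.ofReal (4 / π) *
          ∫⁻ q : ℂ × ℂ, g (psi3 (Complex.normSq q.1 - Complex.normSq q.2) (2 * (q.1 * q.2))) :=
        core (fun p => g (psi3 p.1 p.2)) hG
    _ = ENNReal.ofReal (4 / π) * ∫⁻ q : ℂ × ℂ, g (hopfKS (psi4 q.1 q.2)) := by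
        congr 1
        refine lintegral_congr fun q => ?_
        rw [hopfKS_psi4]
    _ = ENNReal.ofReal (4 / π) * ∫⁻ z, g (hopfKS z) := by
        congr 1
        exact psi4_measurePreserving.lintegral_comp (hg.comp measurable_hopfKS)

end
end

section
/- Let d ≥ 2, let s₁,…,s_{N'} ∈ ℝ^d and f₁,…,f_{N'} > 0, and let λ > 0 satisfy λ · Σ_{j=1}^{N'} ‖s_j‖/f_j < 1. Then for every x ∈ ℝ^d with x ≠ s_j for all j, and every ξ ∈ ℝ^d with ‖ξ‖² + Σ_{j=1}^{N'} f_j/‖x − s_j‖ = λ, one has 2‖ξ‖² + Σ_{j=1}^{N'} f_j·⟨x, x − s_j⟩/‖x − s_j‖³ ≥ λ·(1 − λ·Σ_{j=1}^{N'} ‖s_j‖/f_j) > 0. -/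
open scoped RealInnerProductSpace
open Finset

/-- For purely repulsive Coulomb potentials `V(x) = Σⱼ fⱼ/‖x − sⱼ‖` with all `fⱼ > 0`, and
`0 < λ` with `λ·Σⱼ ‖sⱼ‖/fⱼ < 1`, the Poisson bracket
`{p,a₀}(x,ξ) = 2‖ξ‖² + Σⱼ fⱼ⟨x, x − sⱼ⟩/‖x − sⱼ‖³` is bounded below by
`λ(1 − λ·Σⱼ ‖sⱼ‖/fⱼ) > 0` on the energy shell `p(x,ξ) = λ`. -/
theorem repulsive_coulomb_virial {d : ℕ} (hd : 2 ≤ d) {N' : ℕ}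
    (s : Fin N' → EuclideanSpace ℝ (Fin d)) (f : Fin N' → ℝ) (hf : ∀ j, 0 < f j)
    (lam : ℝ) (hlam : 0 < lam) (hsmall : lam * ∑ j, ‖s j‖ / f j < 1)
    (x ξ : EuclideanSpace ℝ (Fin d)) (hx : ∀ j, x ≠ s j)
    (hshell : ‖ξ‖ ^ 2 + ∑ j, f j / ‖x - s j‖ = lam) :
    2 * ‖ξ‖ ^ 2 + ∑ j, f j * ⟪x, x - s j⟫ / ‖x - s j‖ ^ 3 ≥
        lam * (1 - lam * ∑ j, ‖s j‖ / f j) ∧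
      lam * (1 - lam * ∑ j, ‖s j‖ / f j) > 0 := by
  have hr : ∀ j, 0 < ‖x - s j‖ := fun j => by
    rw [norm_pos_iff]; exact sub_ne_zero.mpr (hx j)
  have hVpos : ∀ j, 0 < f j / ‖x - s j‖ := fun j => div_pos (hf j) (hr j)
  have hVsum : ∑ j, f j / ‖x - s j‖ ≤ lam := by nlinarith [sq_nonneg ‖ξ‖]
  have hVle : ∀ j, f j / ‖x - s j‖ ≤ lam := fun j =>
    le_trans (Finset.single_le_sum (fun i _ => (hVpos i).le) (Finset.mem_univ j)) hVsum
  have hterm : ∀ j ∈ Finset.univ, f j / ‖x - s j‖ - lam * (lam * (‖s j‖ / f j)) ≤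
      f j * ⟪x, x - s j⟫ / ‖x - s j‖ ^ 3 := by
    intro j _
    set r := ‖x - s j‖ with hrdef
    have hrj : 0 < r := hr j
    have hfj := hf j
    have hfr : f j ≤ lam * r := by
      have := hVle j
      rw [div_le_iff₀ hrj] at this
      exact this
    have hip : ‖x - s j‖ ^ 2 - ‖s j‖ * ‖x - s j‖ ≤ ⟪x, x - s j⟫ := by
      have h1 : ⟪x, x - s j⟫ = ⟪x - s j, x - s j⟫ + ⟪s j, x - s j⟫ := by
        rw [← inner_add_left, sub_add_cancel]
      have h2 : ⟪x - s j, x - s j⟫ = ‖x - s j‖ ^ 2 := real_inner_self_eq_norm_sq _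
      have h3 : -(‖s j‖ * ‖x - s j‖) ≤ ⟪s j, x - s j⟫ :=
        neg_le_of_abs_le (abs_real_inner_le_norm _ _)
      linarith
    have hdiv : f j * ‖s j‖ * r ≤ lam ^ 2 * ‖s j‖ * r ^ 3 / f j := by
      rw [le_div_iff₀ hfj]
      have hs := norm_nonneg (s j)
      have hsq : f j * f j ≤ lam * r * (lam * r) := mul_le_mul hfr hfr hfj.le (by positivity)
      nlinarith [mul_le_mul_of_nonneg_right hsq (mul_nonneg hs hrj.le)]
    have key : (f j / r - lam * (lam * (‖s j‖ / f j))) * r ^ 3 ≤ f j * ⟪x, x - s j⟫ := by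
      have h4 : f j * (r ^ 2 - ‖s j‖ * r) ≤ f j * ⟪x, x - s j⟫ :=
        mul_le_mul_of_nonneg_left hip hfj.le
      have h5 : (f j / r - lam * (lam * (‖s j‖ / f j))) * r ^ 3 =
          f j * r ^ 2 - lam ^ 2 * ‖s j‖ * r ^ 3 / f j := by
        field_simp
      rw [h5]
      nlinarith [hdiv]
    rw [le_div_iff₀ (by positivity : (0:ℝ) < r ^ 3)]
    exact key
  have hsum := Finset.sum_le_sum hterm
  rw [Finset.sum_sub_distrib] at hsum
  have hmul : ∑ j, lam * (lam * (‖s j‖ / f j)) = lam * (lam * ∑ j, ‖s j‖ / f j) := by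
    rw [← Finset.mul_sum, ← Finset.mul_sum]
  rw [hmul] at hsum
  constructor
  · nlinarith [sq_nonneg ‖ξ‖]
  · have : lam * ∑ j, ‖s j‖ / f j < 1 := hsmall
    have h1 : 0 < 1 - lam * ∑ j, ‖s j‖ / f j := by linarith
    exact mul_pos hlam h1
end

section
/- Let d ≥ 2, λ > 0, ρ > 0, C₀ > 0 and R₀ > 0, and let V : ℝ^d → ℝ be differentiable at every point x with ‖x‖ > R₀ and satisfy |V(x)| ≤ C₀·⟨x⟩^{−ρ} and ‖∇V(x)‖ ≤ C₀·⟨x⟩^{−ρ−1} whenever ‖x‖ > R₀. Then there exists R₁ ≥ R₀ such that for all x, ξ ∈ ℝ^d with ‖x‖ ≥ R₁ and ‖ξ‖² + V(x) ≥ λ/2, one has 2‖ξ‖² − ⟨x, ∇V(x)⟩ ≥ λ/2. -/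
open scoped RealInnerProductSpace

/-- For a long-range potential `V` (with `|V(x)| ≤ C₀⟨x⟩^{−ρ}` and
`‖∇V(x)‖ ≤ C₀⟨x⟩^{−ρ−1}` for `‖x‖ > R₀`), there exists `R₁ ≥ R₀` such that the Poisson
bracket `{p,a₀}(x,ξ) = 2‖ξ‖² − ⟨x, ∇V(x)⟩` is at least `λ/2` whenever `‖x‖ ≥ R₁` and
`p(x,ξ) = ‖ξ‖² + V(x) ≥ λ/2`. Here `⟨x⟩ = (1 + ‖x‖²)^{1/2}`. -/
theorem virial_at_infinity {d : ℕ} (hd : 2 ≤ d) (lam ρ C₀ R₀ : ℝ)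
    (hlam : 0 < lam) (hρ : 0 < ρ) (hC₀ : 0 < C₀) (hR₀ : 0 < R₀)
    (V : EuclideanSpace ℝ (Fin d) → ℝ)
    (hdiff : ∀ x : EuclideanSpace ℝ (Fin d), R₀ < ‖x‖ → DifferentiableAt ℝ V x)
    (hV : ∀ x : EuclideanSpace ℝ (Fin d), R₀ < ‖x‖ →
      |V x| ≤ C₀ * (1 + ‖x‖ ^ 2) ^ (-(ρ / 2) : ℝ))
    (hV' : ∀ x : EuclideanSpace ℝ (Fin d), R₀ < ‖x‖ →
      ‖gradient V x‖ ≤ C₀ * (1 + ‖x‖ ^ 2) ^ (-((ρ + 1) / 2) : ℝ)) :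
    ∃ R₁ : ℝ, R₀ ≤ R₁ ∧
      ∀ x ξ : EuclideanSpace ℝ (Fin d), R₁ ≤ ‖x‖ → lam / 2 ≤ ‖ξ‖ ^ 2 + V x →
        lam / 2 ≤ 2 * ‖ξ‖ ^ 2 - ⟪x, gradient V x⟫ := by
  set T : ℝ := (8 * C₀ / lam) ^ (1 / ρ : ℝ) with hT
  have hbpos : 0 < 8 * C₀ / lam := by positivity
  have hTpos : 0 < T := Real.rpow_pos_of_pos hbpos _
  refine ⟨max (R₀ + 1) (T + 1), le_trans (by linarith) (le_max_left _ _), ?_⟩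
  intro x ξ hx hp
  have hxR₀ : R₀ < ‖x‖ := lt_of_lt_of_le (by linarith) (le_trans (le_max_left _ _) hx)
  have hxT : T + 1 ≤ ‖x‖ := le_trans (le_max_right _ _) hx
  have hxpos : 0 < ‖x‖ := lt_of_lt_of_le hTpos (by linarith)
  -- key: C₀ * ‖x‖ ^ (-ρ) ≤ lam / 8
  have hTρ : T ^ (ρ : ℝ) = 8 * C₀ / lam := by
    rw [hT, ← Real.rpow_mul hbpos.le, one_div, inv_mul_cancel₀ hρ.ne', Real.rpow_one]
  have hxρ : 8 * C₀ / lam ≤ ‖x‖ ^ (ρ : ℝ) := by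
    rw [← hTρ]
    exact Real.rpow_le_rpow hTpos.le (by linarith) hρ.le
  have hxρpos : 0 < ‖x‖ ^ (ρ : ℝ) := Real.rpow_pos_of_pos hxpos _
  have hkey : C₀ * ‖x‖ ^ (-ρ : ℝ) ≤ lam / 8 := by
    have h8 : C₀ ≤ lam / 8 * ‖x‖ ^ (ρ : ℝ) := by
      have h := mul_le_mul_of_nonneg_left hxρ (by positivity : (0:ℝ) ≤ lam / 8)
      calc C₀ = lam / 8 * (8 * C₀ / lam) := by field_simp
        _ ≤ lam / 8 * ‖x‖ ^ (ρ : ℝ) := h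
    rw [Real.rpow_neg hxpos.le, ← div_eq_mul_inv, div_le_iff₀ hxρpos]
    linarith
  -- bound (1+‖x‖²)^(−ρ/2) ≤ ‖x‖^(−ρ)
  have hsq : (‖x‖ ^ 2 : ℝ) ^ (-(ρ / 2) : ℝ) = ‖x‖ ^ (-ρ : ℝ) := by
    rw [← Real.rpow_natCast ‖x‖ 2, ← Real.rpow_mul hxpos.le]
    congr 1; ring
  have h1 : (1 + ‖x‖ ^ 2 : ℝ) ^ (-(ρ / 2) : ℝ) ≤ ‖x‖ ^ (-ρ : ℝ) := by
    rw [← hsq]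
    exact Real.rpow_le_rpow_of_nonpos (by positivity) (by linarith) (by linarith)
  -- bound ‖x‖ * (1+‖x‖²)^(−(ρ+1)/2) ≤ ‖x‖^(−ρ)
  have hsq2 : (‖x‖ ^ 2 : ℝ) ^ (-((ρ + 1) / 2) : ℝ) = ‖x‖ ^ (-(ρ + 1) : ℝ) := by
    rw [← Real.rpow_natCast ‖x‖ 2, ← Real.rpow_mul hxpos.le]
    congr 1; ring
  have h2 : ‖x‖ * (1 + ‖x‖ ^ 2 : ℝ) ^ (-((ρ + 1) / 2) : ℝ) ≤ ‖x‖ ^ (-ρ : ℝ) := by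
    have hle : (1 + ‖x‖ ^ 2 : ℝ) ^ (-((ρ + 1) / 2) : ℝ) ≤ ‖x‖ ^ (-(ρ + 1) : ℝ) := by
      rw [← hsq2]
      exact Real.rpow_le_rpow_of_nonpos (by positivity) (by linarith) (by linarith)
    calc ‖x‖ * (1 + ‖x‖ ^ 2 : ℝ) ^ (-((ρ + 1) / 2) : ℝ)
        ≤ ‖x‖ * ‖x‖ ^ (-(ρ + 1) : ℝ) := by
          exact mul_le_mul_of_nonneg_left hle hxpos.le
      _ = ‖x‖ ^ (-ρ : ℝ) := by
          nth_rewrite 1 [← Real.rpow_one ‖x‖]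
          rw [← Real.rpow_add hxpos]
          congr 1; ring
  -- bounds on V and gradient
  have hVx : |V x| ≤ lam / 8 := by
    calc |V x| ≤ C₀ * (1 + ‖x‖ ^ 2) ^ (-(ρ / 2) : ℝ) := hV x hxR₀
      _ ≤ C₀ * ‖x‖ ^ (-ρ : ℝ) := mul_le_mul_of_nonneg_left h1 hC₀.le
      _ ≤ lam / 8 := hkey
  have hinner : ⟪x, gradient V x⟫ ≤ lam / 8 := by
    calc ⟪x, gradient V x⟫ ≤ ‖x‖ * ‖gradient V x‖ := real_inner_le_norm x _
      _ ≤ ‖x‖ * (C₀ * (1 + ‖x‖ ^ 2) ^ (-((ρ + 1) / 2) : ℝ)) :=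
          mul_le_mul_of_nonneg_left (hV' x hxR₀) hxpos.le
      _ = C₀ * (‖x‖ * (1 + ‖x‖ ^ 2) ^ (-((ρ + 1) / 2) : ℝ)) := by ring
      _ ≤ C₀ * ‖x‖ ^ (-ρ : ℝ) := mul_le_mul_of_nonneg_left h2 hC₀.le
      _ ≤ lam / 8 := hkey
  have habs := abs_le.mp hVx
  linarith [habs.1, habs.2]
end
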